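/- arXiv:1805.10713 — 3 statements merged into one kernel-verified Lean document; each statement's English description precedes it below -/
import Mathlib

section
/- There is no nonprincipal ultrafilter V on ℕ that is universally measurable as a subset of 𝒫(ℕ) ≅ 2^ℕ; equivalently, a nonprincipal ultrafilter, viewed as a subset of Cantor space, is not measurable with respect to every complete finite Borel measure (in particular, it is not Lebesgue/Haar measurable). -/
open MeasureTheory

open scoped symmDiff Pointwise

/-- A subset of Cantor space is universally measurable if it is measurable with
respect to (the completion of) every finite Borel measure. -/
def UnivMeasurable (s : Set (ℕ → Bool)) : Prop :=
  ∀ ν : Measure (ℕ → Bool), IsFiniteMeasure ν → NullMeasurableSet s ν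

/-! The `V`-limit `f ↦ lim_V f` is a homomorphism `2^ℕ → ℤ/2`, and the ultrafilter is the
complement of its kernel `H`. Having index two, `H` has positive Haar measure, so if it were
Haar measurable Steinhaus's theorem would make it open, and it would contain a cylinder around `0`.
As `V` is nonprincipal, `H` also contains every finitely supported sequence; a cylinder plus the
finitely supported sequences is everything, yet the constant sequence `true` is not in `H`. -/

section Haar

variable {G : Type*} [Group G] [MeasurableSpace G]

@[to_additive]
theorem measure_pos_of_union_smul_eq_univ [MeasurableMul G] (μ : Measure G)
    [μ.IsMulLeftInvariant] [NeZero μ] {s : Set G} {c : G} (h : s ∪ c • s = Set.univ) :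
    0 < μ s := by
  refine pos_iff_ne_zero.2 fun hs => NeZero.ne μ (Measure.measure_univ_eq_zero.1 ?_)
  rw [← h]
  exact measure_union_null hs (by rwa [measure_smul])

variable [TopologicalSpace G] [IsTopologicalGroup G] [BorelSpace G] [LocallyCompactSpace G]

@[to_additive]
theorem Subgroup.isOpen_of_nullMeasurableSet_of_haar_pos (μ : Measure G) [μ.IsHaarMeasure]
    [μ.InnerRegular] (H : Subgroup G) (hH : NullMeasurableSet (H : Set G) μ)
    (hpos : 0 < μ H) : IsOpen (H : Set G) := by
  obtain ⟨E, hEH, hE, hEH_ae⟩ := hH.exists_measurable_subset_ae_eq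
  have hEE : E / E ∈ nhds (1 : G) :=
    Measure.div_mem_nhds_one_of_haar_pos μ E hE (by rwa [measure_congr hEH_ae])
  refine H.isOpen_of_mem_nhds (Filter.mem_of_superset hEE ?_)
  exact Set.div_subset_iff.2 fun x hx y hy => H.div_mem (hEH hx) (hEH hy)

end Haar

@[to_additive]
theorem Submonoid.eq_top_of_isOpen_of_mulSupport_finite_mem {ι M : Type*} [Monoid M]
    [TopologicalSpace M] (H : Submonoid (ι → M)) (hH : IsOpen (H : Set (ι → M)))
    (hfin : ∀ f : ι → M, (Function.mulSupport f).Finite → f ∈ H) : H = ⊤ := by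
  refine eq_top_iff.2 fun f _ => ?_
  have hH₁ : (H : Set (ι → M)) ∈ nhds 1 := hH.mem_nhds H.one_mem
  rw [nhds_pi, Filter.mem_pi] at hH₁
  obtain ⟨I, hI, t, ht, hIt⟩ := hH₁
  rw [← Set.mulIndicator_self_mul_compl I f]
  refine H.mul_mem (hfin _ (hI.subset Set.mulSupport_mulIndicator_subset)) (hIt fun i hi => ?_)
  simpa [Set.mulIndicator_of_notMem (Set.notMem_compl_iff.2 hi)] using mem_of_mem_nhds (ht i)

theorem AddMonoidHom.coe_ker_union_vadd_eq_univ {G : Type*} [AddGroup G] (φ : G →+ Bool) {c : G}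
    (hc : φ c = 1) : (φ.ker : Set G) ∪ (c +ᵥ (φ.ker : Set G)) = Set.univ := by
  ext f
  simp only [Set.mem_union, SetLike.mem_coe, Set.mem_vadd_set_iff_neg_vadd_mem, AddMonoidHom.mem_ker,
    vadd_eq_add, map_add, map_neg, hc, Set.mem_univ, iff_true]
  cases φ f <;> decide

theorem Ultrafilter.symmDiff_mem_iff {α : Type*} (V : Ultrafilter α) (A B : Set α) :
    A ∆ B ∈ V ↔ Xor (A ∈ V) (B ∈ V) := by
  simp only [Set.symmDiff_def, Ultrafilter.union_mem_iff, Ultrafilter.sdiff_mem_iff]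
  rfl

theorem Bool.setOf_add_eq_true {ι : Type*} (f g : ι → Bool) :
    {i | (f + g) i = true} = {i | f i = true} ∆ {i | g i = true} := by
  ext i
  simp only [Set.mem_ofPred_eq, Set.mem_symmDiff, Pi.add_apply]
  cases f i <;> cases g i <;> decide

namespace Ultrafilter

variable {ι : Type*} (V : Ultrafilter ι)

open Classical in
noncomputable def limBool : (ι → Bool) →+ Bool where
  toFun f := decide ({i | f i = true} ∈ V)
  map_zero' := by simp [show (0 : Bool) = false from rfl]
  map_add' f g := by
    rw [Bool.setOf_add_eq_true, V.symmDiff_mem_iff]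
    by_cases hf : {i | f i = true} ∈ V <;> by_cases hg : {i | g i = true} ∈ V <;>
      simp [hf, hg, xor_def] <;> rfl

theorem limBool_eq_zero_iff (f : ι → Bool) : V.limBool f = 0 ↔ {i | f i = true} ∉ V := by
  simp [limBool, show (0 : Bool) = false from rfl]

theorem limBool_const (b : Bool) : V.limBool (fun _ => b) = b := by
  cases b
  · simp [limBool]
  · simp only [limBool, AddMonoidHom.coe_mk, ZeroHom.coe_mk, Set.ofPred_true, decide_eq_true_eq]
    exact Filter.univ_mem

theorem limBool_eq_zero_of_support_finite (hV : ∀ a, V ≠ pure a) {f : ι → Bool}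
    (hf : (Function.support f).Finite) : V.limBool f = 0 := by
  refine (V.limBool_eq_zero_iff f).2 fun hfV => ?_
  have hsupp : {i | f i = true} ⊆ Function.support f := fun i (hi : f i = true) => by
    simp only [Function.mem_support, hi]
    decide
  obtain ⟨a, -, ha⟩ := V.eq_pure_of_finite_mem (hf.subset hsupp) hfV
  exact hV a ha

end Ultrafilter

theorem stmt10 (V : Ultrafilter ℕ) (hV : ∀ a : ℕ, V ≠ pure a) :
    ¬ UnivMeasurable {f : ℕ → Bool | {n : ℕ | f n = true} ∈ V} := by
  intro hU
  let μ : Measure (ℕ → Bool) := Measure.addHaar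
  have hS : {f : ℕ → Bool | {n : ℕ | f n = true} ∈ V} = (V.limBool.ker : Set (ℕ → Bool))ᶜ := by
    ext f
    simp [V.limBool_eq_zero_iff]
  have hker : NullMeasurableSet (V.limBool.ker : Set (ℕ → Bool)) μ := by
    simpa [hS] using (hU μ inferInstance).compl
  have hopen := V.limBool.ker.isOpen_of_nullMeasurableSet_of_addHaar_pos μ hker <|
    measure_pos_of_union_vadd_eq_univ μ <|
      V.limBool.coe_ker_union_vadd_eq_univ (V.limBool_const true)
  have htop := AddSubmonoid.eq_top_of_isOpen_of_support_finite_mem _ hopen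
    fun f hf => V.limBool_eq_zero_of_support_finite hV hf
  have hconst : (fun _ => true) ∈ V.limBool.ker := by
    rw [← AddSubgroup.mem_toAddSubmonoid, htop]
    exact AddSubmonoid.mem_top _
  rw [AddMonoidHom.mem_ker, V.limBool_const] at hconst
  exact absurd hconst (by decide)
end

section
/- Let U be a nonprincipal ultrafilter on ℕ, and let (J_n) be the block partition from the proof (each J_n, except possibly one, a union of two consecutive intervals I_m, I_{m+1} with ⋃ of the larger members in U). Let S = {A ⊆ ℕ : ∀n, A ∩ J_n ∈ {∅, J_n}}. Then for every A ∈ S, the set {k : |A ∩ [0,k)|/k ∈ [0,1/4) ∪ (3/4,1]} belongs to U; consequently μ_U(A) ∈ [0,1/4) ∪ (3/4,1] for all A ∈ S. -/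
noncomputable def dens (A : Set ℕ) (n : ℕ) : ℝ := ((A ∩ Set.Iio n).ncard : ℝ) / n

lemma aux_ncard_Iio (k : ℕ) : (Set.Iio k).ncard = k := by
  rw [← Finset.coe_Iio, Set.ncard_coe_finset, Nat.card_Iio]

lemma aux_ncard_Ico (a b : ℕ) : (Set.Ico a b).ncard = b - a := by
  rw [← Finset.coe_Ico, Set.ncard_coe_finset, Nat.card_Ico]

lemma memC (A : Set ℕ) (k p : ℕ) (hk : 5 ^ (p + 1) ≤ k)
    (h : Set.Ico (5 ^ p) k ⊆ A ∨ A ∩ Set.Ico (5 ^ p) k = ∅) :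
    dens A k ∈ Set.Icc (0 : ℝ) (1 / 5) ∪ Set.Icc (4 / 5 : ℝ) 1 := by
  have h5 : 5 ^ (p + 1) = 5 ^ p * 5 := pow_succ 5 p
  have hk0 : 0 < k := lt_of_lt_of_le (by positivity) hk
  have hkR : (0 : ℝ) < (k : ℝ) := by exact_mod_cast hk0
  have hfin : (A ∩ Set.Iio k).Finite := (Set.finite_Iio k).subset Set.inter_subset_right
  have hNk : (A ∩ Set.Iio k).ncard ≤ k := by
    have := Set.ncard_le_ncard (Set.inter_subset_right (s := A) (t := Set.Iio k))
      (Set.finite_Iio k)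
    rwa [aux_ncard_Iio] at this
  rcases h with h | h
  · right
    have hsub : Set.Ico (5 ^ p) k ⊆ A ∩ Set.Iio k := fun x hx => ⟨h hx, hx.2⟩
    have hN : k - 5 ^ p ≤ (A ∩ Set.Iio k).ncard := by
      have := Set.ncard_le_ncard hsub hfin
      rwa [aux_ncard_Ico] at this
    constructor
    · rw [dens, div_le_div_iff₀ (by norm_num) hkR]
      have : 4 * k ≤ (A ∩ Set.Iio k).ncard * 5 := by omega
      exact_mod_cast this
    · rw [dens, div_le_one hkR]
      exact_mod_cast hNk
  · left
    have hsub : A ∩ Set.Iio k ⊆ Set.Iio (5 ^ p) := by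
      rintro x ⟨hxA, hxk⟩
      by_contra h'
      have hx : x ∈ A ∩ Set.Ico (5 ^ p) k := ⟨hxA, ⟨not_lt.mp h', hxk⟩⟩
      rw [h] at hx
      exact hx
    have hN : (A ∩ Set.Iio k).ncard ≤ 5 ^ p := by
      have := Set.ncard_le_ncard hsub (Set.finite_Iio _)
      rwa [aux_ncard_Iio] at this
    constructor
    · rw [dens]; positivity
    · rw [dens, div_le_div_iff₀ hkR (by norm_num)]
      have : (A ∩ Set.Iio k).ncard * 5 ≤ 1 * k := by omega
      exact_mod_cast this

lemma dens01 (A : Set ℕ) (k : ℕ) (J0 : Set ℕ) (hJk : Set.Iio k ⊆ J0)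
    (h : A ∩ J0 = ∅ ∨ A ∩ J0 = J0) :
    dens A k ∈ Set.Icc (0 : ℝ) (1 / 5) ∪ Set.Icc (4 / 5 : ℝ) 1 := by
  rcases h with h | h
  · left
    have : A ∩ Set.Iio k = ∅ := by
      apply Set.eq_empty_of_subset_empty
      rw [← h]
      exact fun x hx => ⟨hx.1, hJk hx.2⟩
    rw [dens, this]
    norm_num
  · have hJA : J0 ⊆ A := Set.inter_eq_right.mp h
    have : A ∩ Set.Iio k = Set.Iio k := Set.inter_eq_right.mpr fun x hx => hJA (hJk hx)
    rw [dens, this, aux_ncard_Iio]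
    rcases Nat.eq_zero_or_pos k with rfl | hk
    · left; norm_num
    · right
      rw [div_self (by exact_mod_cast hk.ne')]
      norm_num

theorem stmt12 (U : Ultrafilter ℕ) (hU : ∀ a : ℕ, U ≠ pure a)
    (I : ℕ → Set ℕ) (hI0 : I 0 = {0})
    (hI : ∀ n : ℕ, 1 ≤ n → I n = Set.Ico (5 ^ (n - 1)) (5 ^ n))
    (J : ℕ → Set ℕ)
    (hJ : ((⋃ n ∈ {n : ℕ | Even n}, I n) ∈ U ∧ J 0 = I 0 ∪ I 1 ∪ I 2 ∧
            ∀ n : ℕ, 1 ≤ n → J n = I (2 * n + 1) ∪ I (2 * n + 2)) ∨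
          ((⋃ n ∈ {n : ℕ | Odd n}, I n) ∈ U ∧
            ∀ n : ℕ, J n = I (2 * n) ∪ I (2 * n + 1)))
    (A : Set ℕ) (hA : ∀ n : ℕ, A ∩ J n = ∅ ∨ A ∩ J n = J n)
    (μA : ℝ) (hμA : Filter.Tendsto (dens A) (U : Filter ℕ) (nhds μA)) :
    {k : ℕ | dens A k ∈ Set.Ico (0 : ℝ) (1 / 4) ∪ Set.Ioc (3 / 4 : ℝ) 1} ∈ U ∧
    μA ∈ Set.Ico (0 : ℝ) (1 / 4) ∪ Set.Ioc (3 / 4 : ℝ) 1 := by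
  set C : Set ℝ := Set.Icc (0 : ℝ) (1 / 5) ∪ Set.Icc (4 / 5 : ℝ) 1 with hC
  -- key: the set of good k is in U
  have key : {k : ℕ | dens A k ∈ C} ∈ U := by
    rcases hJ with ⟨hW, hJ0, hJn⟩ | ⟨hW, hJn⟩
    · refine U.toFilter.mem_of_superset hW ?_
      intro k hk
      simp only [Set.mem_iUnion, Set.mem_setOf_eq] at hk
      obtain ⟨m, hm, hkm⟩ := hk
      obtain ⟨r, rfl⟩ := hm
      match r with
      | 0 =>
        rw [(by omega : (0:ℕ) + 0 = 0), hI0] at hkm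
        simp only [Set.mem_singleton_iff] at hkm
        subst hkm
        show dens A 0 ∈ C
        left
        rw [dens]
        norm_num
      | 1 =>
        -- k ∈ I 2 = [5,25), Iio k ⊆ J 0
        rw [(by omega : (1:ℕ) + 1 = 2), hI 2 (by norm_num)] at hkm
        refine dens01 A k (J 0) ?_ (hA 0)
        rw [hJ0, hI0, hI 1 (by norm_num), hI 2 (by norm_num)]
        intro x hx
        simp only [Set.mem_Iio] at hx
        simp only [Set.mem_union, Set.mem_singleton_iff, Set.mem_Ico]
        have : x < 5 ^ 2 := lt_of_lt_of_le hx (le_of_lt hkm.2)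
        norm_num at this ⊢
        omega
      | (j + 2) =>
        -- k ∈ I (2j+4) = [5^{2j+3}, 5^{2j+4}), J (j+1) = I(2j+3) ∪ I(2j+4)
        rw [(by omega : j + 2 + (j + 2) = 2 * (j + 2)), hI (2 * (j + 2)) (by omega)] at hkm
        have h1 : 2 * (j + 2) - 1 = 2 * j + 3 := by omega
        have h2 : 2 * (j + 2) = 2 * j + 4 := by omega
        rw [h1, h2] at hkm
        refine memC A k (2 * j + 2) (by calc 5 ^ (2 * j + 3) ≤ k := hkm.1) ?_
        have hJeq : J (j + 1) = Set.Ico (5 ^ (2 * j + 2)) (5 ^ (2 * j + 4)) := by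
          rw [hJn (j + 1) (by omega), hI (2 * (j + 1) + 1) (by omega),
            hI (2 * (j + 1) + 2) (by omega)]
          have e1 : 2 * (j + 1) + 1 - 1 = 2 * j + 2 := by omega
          have e2 : 2 * (j + 1) + 1 = 2 * j + 3 := by omega
          have e3 : 2 * (j + 1) + 2 - 1 = 2 * j + 3 := by omega
          have e4 : 2 * (j + 1) + 2 = 2 * j + 4 := by omega
          rw [e1, e2, e3, e4, Set.Ico_union_Ico_eq_Ico]
          · exact pow_le_pow_right₀ (by norm_num) (by omega)
          · exact pow_le_pow_right₀ (by norm_num) (by omega)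
        have hsub : Set.Ico (5 ^ (2 * j + 2)) k ⊆ J (j + 1) := by
          rw [hJeq]
          exact Set.Ico_subset_Ico_right (le_of_lt hkm.2)
        rcases hA (j + 1) with h | h
        · right
          apply Set.eq_empty_of_subset_empty
          rw [← h]
          exact fun x hx => ⟨hx.1, hsub hx.2⟩
        · left
          exact fun x hx => Set.inter_eq_right.mp h (hsub hx)
    · refine U.toFilter.mem_of_superset hW ?_
      intro k hk
      simp only [Set.mem_iUnion, Set.mem_setOf_eq] at hk
      obtain ⟨m, hm, hkm⟩ := hk
      obtain ⟨r, rfl⟩ := hm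
      match r with
      | 0 =>
        -- k ∈ I 1 = [1,5), Iio k ⊆ J 0 = I 0 ∪ I 1
        rw [(by omega : 2 * 0 + 1 = 1), hI 1 (by norm_num)] at hkm
        refine dens01 A k (J 0) ?_ (hA 0)
        rw [hJn 0]
        norm_num
        rw [hI0, hI 1 (by norm_num)]
        intro x hx
        simp only [Set.mem_Iio] at hx
        simp only [Set.mem_union, Set.mem_singleton_iff, Set.mem_Ico]
        have : x < 5 ^ 1 := lt_of_lt_of_le hx (le_of_lt hkm.2)
        norm_num at this ⊢
        omega
      | (j + 1) =>
        -- k ∈ I (2j+3) = [5^{2j+2}, 5^{2j+3}), J (j+1) = I(2j+2) ∪ I(2j+3)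
        rw [hI (2 * (j + 1) + 1) (by omega)] at hkm
        have h1 : 2 * (j + 1) + 1 - 1 = 2 * j + 2 := by omega
        have h2 : 2 * (j + 1) + 1 = 2 * j + 3 := by omega
        rw [h1, h2] at hkm
        refine memC A k (2 * j + 1) (by calc 5 ^ (2 * j + 2) ≤ k := hkm.1) ?_
        have hJeq : J (j + 1) = Set.Ico (5 ^ (2 * j + 1)) (5 ^ (2 * j + 3)) := by
          rw [hJn (j + 1), hI (2 * (j + 1)) (by omega), hI (2 * (j + 1) + 1) (by omega)]
          have e1 : 2 * (j + 1) - 1 = 2 * j + 1 := by omega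
          have e2 : 2 * (j + 1) = 2 * j + 2 := by omega
          rw [h1, h2, e1, e2, Set.Ico_union_Ico_eq_Ico]
          · exact pow_le_pow_right₀ (by norm_num) (by omega)
          · exact pow_le_pow_right₀ (by norm_num) (by omega)
        have hsub : Set.Ico (5 ^ (2 * j + 1)) k ⊆ J (j + 1) := by
          rw [hJeq]
          exact Set.Ico_subset_Ico_right (le_of_lt hkm.2)
        rcases hA (j + 1) with h | h
        · right
          apply Set.eq_empty_of_subset_empty
          rw [← h]
          exact fun x hx => ⟨hx.1, hsub hx.2⟩
        · left
          exact fun x hx => Set.inter_eq_right.mp h (hsub hx)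
  have hCsub : C ⊆ Set.Ico (0 : ℝ) (1 / 4) ∪ Set.Ioc (3 / 4 : ℝ) 1 := by
    intro x hx
    rcases hx with hx | hx
    · left; exact ⟨hx.1, lt_of_le_of_lt hx.2 (by norm_num)⟩
    · right; exact ⟨lt_of_lt_of_le (by norm_num) hx.1, hx.2⟩
  constructor
  · exact U.toFilter.mem_of_superset key fun k hk => hCsub hk
  · have hCclosed : IsClosed C := isClosed_Icc.union isClosed_Icc
    exact hCsub (hCclosed.mem_of_tendsto hμA key)
end

section
/- For any nonprincipal ultrafilter U on ℕ, the function μ_U : 𝒫(ℕ) → [0,1], μ_U(A) = lim_{n→U}|A ∩ [0,n)|/n, is not universally measurable: there exists a complete finite Borel measure ν on 2^ℕ and an open set O ⊆ [0,1] such that μ_U^{-1}(O) is not ν-measurable. -/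
/-!
Push the coin-tossing (Haar) measure on `ℕ → Bool` forward along `x ↦ x ∘ blockIndex`, which
spreads bit `k` of `x` over a block of length about `2 ^ (k + 1)²`, and write `g x` for the
`U`-limit density of the spread set. Since the blocks grow so fast, `g x` is unchanged by finitely
many bit flips, `g (1 + x) = 1 - g x`, and `g x = 1` (resp. `0`) when the bits of the block of `n`
and of the block before it are both `true` (resp. both `false`) for `U`-almost all `n`.

If `{g > 0}` were measurable, it would be null or conull by the zero-one law for sets invariant
under finite flips (Haar measure is ergodic under any dense set of translations). Flipping all
bits then makes both of these sets null, so for almost every `x` the two bits differ for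
`U`-almost all `n`. Flipping every other bit turns this into its negation, so the whole space
would be null.
-/

open MeasureTheory

open Filter Set

lemma dens_le_one (A : Set ℕ) (n : ℕ) : dens A n ≤ 1 := by
  rcases n.eq_zero_or_pos with rfl | hn
  · simp [dens]
  · rw [dens, div_le_one (by positivity)]
    exact_mod_cast (ncard_le_ncard inter_subset_right (finite_Iio n)).trans_eq (ncard_Iio_nat n)

lemma dens_compl (A : Set ℕ) {n : ℕ} (hn : n ≠ 0) : dens Aᶜ n = 1 - dens A n := by
  have hcard : (A ∩ Iio n).ncard + (Aᶜ ∩ Iio n).ncard = n := by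
    rw [← ncard_union_eq (disjoint_compl_left.mono inter_subset_left inter_subset_left).symm
      ((finite_Iio n).subset inter_subset_right) ((finite_Iio n).subset inter_subset_right),
      ← union_inter_distrib_right, union_compl_self, univ_inter, ncard_Iio_nat]
  rw [dens, dens, eq_sub_iff_add_eq, ← add_div, div_eq_one_iff_eq (by exact_mod_cast hn)]
  exact_mod_cast (add_comm _ _).trans hcard

lemma dens_le_dens_add (A B : Set ℕ) (hAB : (A \ B).Finite) (n : ℕ) :
    dens A n ≤ dens B n + (A \ B).ncard / n := by
  rw [dens, dens, ← add_div]
  gcongr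
  have hcover : A ∩ Iio n ⊆ (B ∩ Iio n) ∪ (A \ B) := fun j ⟨hjA, hjn⟩ => by
    by_cases hjB : j ∈ B <;> simp_all
  have hfin : ((B ∩ Iio n) ∪ (A \ B)).Finite := ((finite_Iio n).subset inter_subset_right).union hAB
  exact_mod_cast (ncard_le_ncard hcover hfin).trans (ncard_union_le _ _)

section Limit

variable {l : Filter ℕ} [l.NeBot] {μ : Set ℕ → ℝ}

lemma limit_le_of_finite_diff (hμ : ∀ A, Tendsto (dens A) l (nhds (μ A))) (hl : l ≤ atTop)
    {A B : Set ℕ} (hAB : (A \ B).Finite) : μ A ≤ μ B := by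
  have hvanish : Tendsto (fun n : ℕ => ((A \ B).ncard : ℝ) / n) l (nhds 0) :=
    (tendsto_const_div_atTop_nhds_zero_nat _).mono_left hl
  simpa using le_of_tendsto_of_tendsto' (hμ A) ((hμ B).add hvanish) (dens_le_dens_add A B hAB)

lemma limit_eq_of_finite_diff (hμ : ∀ A, Tendsto (dens A) l (nhds (μ A))) (hl : l ≤ atTop)
    {A B : Set ℕ} (hAB : (A \ B).Finite) (hBA : (B \ A).Finite) : μ A = μ B :=
  (limit_le_of_finite_diff hμ hl hAB).antisymm (limit_le_of_finite_diff hμ hl hBA)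

lemma limit_compl (hμ : ∀ A, Tendsto (dens A) l (nhds (μ A))) (hl : l ≤ atTop) (A : Set ℕ) :
    μ Aᶜ = 1 - μ A := by
  refine tendsto_nhds_unique (hμ Aᶜ) ((tendsto_const_nhds.sub (hμ A)).congr' ?_)
  filter_upwards [(eventually_ne_atTop 0).filter_mono hl] with n hn
  exact (dens_compl A hn).symm

lemma limit_eq_one (hμ : ∀ A, Tendsto (dens A) l (nhds (μ A))) {A : Set ℕ} {ε : ℕ → ℝ}
    (hε : Tendsto ε l (nhds 0)) (hA : ∀ᶠ n in l, 1 - ε n ≤ dens A n) : μ A = 1 :=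
  (le_of_tendsto' (hμ A) (dens_le_one A)).antisymm <| by
    simpa using le_of_tendsto_of_tendsto (tendsto_const_nhds.sub hε) (hμ A) hA

end Limit

/-- Block `k` is `[2 ^ k² - 1, 2 ^ (k + 1)² - 1)`. Each block dwarfs all earlier ones, so the last
two blocks meeting `[0, n)` cover almost all of it. -/
def blockIndex (n : ℕ) : ℕ := Nat.sqrt (Nat.log 2 (n + 1))

lemma le_blockIndex_iff {m n : ℕ} : m ≤ blockIndex n ↔ 2 ^ (m * m) ≤ n + 1 := by
  rw [blockIndex, Nat.le_sqrt, Nat.le_log_iff_pow_le one_lt_two n.succ_ne_zero]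

lemma blockIndex_mono : Monotone blockIndex := fun _ _ hab =>
  le_blockIndex_iff.2 ((le_blockIndex_iff.1 le_rfl).trans (by omega))

lemma tendsto_blockIndex_atTop : Tendsto blockIndex atTop atTop :=
  tendsto_atTop.2 fun m => by
    filter_upwards [eventually_ge_atTop (2 ^ (m * m))] with n hn
    exact le_blockIndex_iff.2 (by omega)

lemma Set.Finite.preimage_blockIndex {s : Set ℕ} (hs : s.Finite) : (blockIndex ⁻¹' s).Finite := by
  have hT : Tendsto blockIndex cofinite cofinite := by
    rw [Nat.cofinite_eq_atTop]
    exact tendsto_blockIndex_atTop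
  simpa [mem_cofinite] using hT hs.compl_mem_cofinite

lemma pow_mul_succ_le_pow_succ_sq (k : ℕ) : 2 ^ (k * k) * (k + 1) ≤ 2 ^ ((k + 1) * (k + 1)) := by
  rw [show (k + 1) * (k + 1) = k * k + (2 * k + 1) by ring, pow_add]
  have := Nat.lt_two_pow_self (n := 2 * k + 1)
  gcongr
  omega

lemma one_sub_inv_blockIndex_le_dens {A : Set ℕ} {n : ℕ} (hn : 0 < blockIndex n)
    (hA : ∀ j < n, blockIndex n - 1 ≤ blockIndex j → j ∈ A) :
    1 - 1 / (blockIndex n : ℝ) ≤ dens A n := by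
  obtain ⟨k, hk⟩ : ∃ k, blockIndex n = k + 1 := ⟨_, (Nat.succ_pred_eq_of_pos hn).symm⟩
  have hnk : 2 ^ ((k + 1) * (k + 1)) ≤ n + 1 := le_blockIndex_iff.1 hk.ge
  have hgrowth := pow_mul_succ_le_pow_succ_sq k
  have hpos := Nat.one_le_two_pow (n := k * k)
  set a := 2 ^ (k * k) - 1
  have hcover : Ico a n ⊆ A ∩ Iio n := fun j ⟨haj, hjn⟩ =>
    ⟨hA j hjn (by rw [hk, Nat.add_sub_cancel]; exact le_blockIndex_iff.2 (by omega)), hjn⟩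
  have hcard : n ≤ (A ∩ Iio n).ncard + a := by
    have := ncard_le_ncard hcover ((finite_Iio n).subset inter_subset_right)
    rw [ncard_Ico_nat] at this
    omega
  have hak : a * (k + 1) ≤ n := by
    rw [Nat.sub_one_mul]
    omega
  have hn' : (0 : ℝ) < n := by
    have := Nat.one_lt_two_pow (n := (k + 1) * (k + 1)) (by positivity)
    exact_mod_cast (show 0 < n by omega)
  have hcard' : (n : ℝ) ≤ (A ∩ Iio n).ncard + a := by exact_mod_cast hcard
  have hak' : (a : ℝ) * (k + 1) ≤ n := by exact_mod_cast hak
  rw [dens, hk, le_div_iff₀ hn']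
  push_cast
  have : (a : ℝ) ≤ n / (k + 1) := by rw [le_div_iff₀ (by positivity)]; exact hak'
  calc (1 - 1 / ((k : ℝ) + 1)) * n = n - n / (k + 1) := by ring
    _ ≤ _ := by linarith

lemma dense_setOf_finite_setOf_eq_true : Dense {e : ℕ → Bool | {i | e i = true}.Finite} := by
  intro x
  refine mem_closure_of_tendsto (f := fun N i => x i && decide (i < N)) (b := atTop) ?_ ?_
  · refine tendsto_pi_nhds.2 fun i => tendsto_const_nhds.congr' ?_
    filter_upwards [eventually_gt_atTop i] with N hN
    simp [hN]
  · exact Eventually.of_forall fun N => (finite_Iio N).subset fun i hi => by simp_all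

lemma measure_eq_zero_or_compl_of_flip_invariant (ν : Measure (ℕ → Bool)) [ν.IsAddHaarMeasure]
    {S : Set (ℕ → Bool)} (hS : NullMeasurableSet S ν)
    (hflip : ∀ e : ℕ → Bool, {i | e i = true}.Finite → (e + ·) ⁻¹' S = S) :
    ν S = 0 ∨ ν Sᶜ = 0 := by
  have := aeconst_of_dense_setOfPred_preimage_vadd_eq hS
    (dense_setOf_finite_setOf_eq_true.mono fun e he => hflip e he)
  rw [eventuallyConst_set] at this
  rcases this with h | h
  · exact Or.inr (ae_iff.1 h)
  · exact Or.inl (measure_eq_zero_iff_ae_notMem.2 h)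

section LastBlocks

variable {l : Filter ℕ} {μ : Set ℕ → ℝ}

def lastBlocksEq (l : Filter ℕ) (b : Bool) : Set (ℕ → Bool) :=
  {x | ∀ᶠ n in l, x (blockIndex n - 1) = b ∧ x (blockIndex n) = b}

lemma eventually_pos_blockIndex (hl : l ≤ atTop) : ∀ᶠ n in l, 0 < blockIndex n :=
  (tendsto_blockIndex_atTop.eventually_gt_atTop 0).filter_mono hl

lemma preimage_one_add_lastBlocksEq (b : Bool) :
    (1 + ·) ⁻¹' lastBlocksEq l b = lastBlocksEq l (!b) := by
  ext x
  simp [lastBlocksEq, Bool.add_eq_xor, Bool.one_eq_true]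

lemma limit_eq_one_of_mem_lastBlocksEq [l.NeBot] (hμ : ∀ A, Tendsto (dens A) l (nhds (μ A)))
    (hl : l ≤ atTop) {x : ℕ → Bool} (hx : x ∈ lastBlocksEq l true) :
    μ {n | x (blockIndex n) = true} = 1 := by
  have hε : Tendsto (fun n => 1 / (blockIndex n : ℝ)) l (nhds 0) :=
    (tendsto_one_div_atTop_nhds_zero_nat.comp tendsto_blockIndex_atTop).mono_left hl
  refine limit_eq_one hμ hε ?_
  filter_upwards [hx, eventually_pos_blockIndex hl] with n ⟨hprev, hlast⟩ hn
  refine one_sub_inv_blockIndex_le_dens hn fun j hj hjn => ?_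
  have := blockIndex_mono hj.le
  obtain h | h : blockIndex j = blockIndex n - 1 ∨ blockIndex j = blockIndex n := by omega
  all_goals simp_all

lemma limit_eq_zero_of_mem_lastBlocksEq [l.NeBot] (hμ : ∀ A, Tendsto (dens A) l (nhds (μ A)))
    (hl : l ≤ atTop) {x : ℕ → Bool} (hx : x ∈ lastBlocksEq l false) :
    μ {n | x (blockIndex n) = true} = 0 := by
  have hflip : (1 + x) ∈ lastBlocksEq l true := by
    rw [← Set.mem_preimage, preimage_one_add_lastBlocksEq]; exact hx
  have := limit_eq_one_of_mem_lastBlocksEq hμ hl hflip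
  have hcompl : {n | (1 + x) (blockIndex n) = true} = {n | x (blockIndex n) = true}ᶜ := by
    ext n; simp [Bool.add_eq_xor, Bool.one_eq_true]
  rw [hcompl, limit_compl hμ hl] at this
  linarith

lemma limit_blocks_add_of_finite [l.NeBot] (hμ : ∀ A, Tendsto (dens A) l (nhds (μ A)))
    (hl : l ≤ atTop) {e : ℕ → Bool} (he : {i | e i = true}.Finite) (x : ℕ → Bool) :
    μ {n | (e + x) (blockIndex n) = true} = μ {n | x (blockIndex n) = true} := by
  have hdiff : ∀ {A B : Set ℕ}, A \ B ⊆ blockIndex ⁻¹' {i | e i = true} → (A \ B).Finite :=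
    fun h => he.preimage_blockIndex.subset h
  refine limit_eq_of_finite_diff hμ hl (hdiff ?_) (hdiff ?_) <;> intro n <;>
    simp only [Set.mem_sdiff, mem_ofPred_eq, mem_preimage, Pi.add_apply, Bool.add_eq_xor] <;>
    cases e (blockIndex n) <;> simp

lemma mem_lastBlocksEq_of_eventually_eq {U : Ultrafilter ℕ} {x : ℕ → Bool}
    (hx : ∀ᶠ n in U, x (blockIndex n - 1) = x (blockIndex n)) : ∃ b, x ∈ lastBlocksEq U b := by
  rcases Ultrafilter.eventually_or.1 (Eventually.of_forall fun n => Bool.eq_false_or_eq_true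
    (x (blockIndex n))) with h | h
  · exact ⟨true, by filter_upwards [hx, h] with n h₁ h₂; simp_all⟩
  · exact ⟨false, by filter_upwards [hx, h] with n h₁ h₂; simp_all⟩

def alternating (i : ℕ) : Bool := decide (Odd i)

lemma eventually_eq_add_alternating {U : Ultrafilter ℕ} (hU : (U : Filter ℕ) ≤ atTop)
    {x : ℕ → Bool}
    (hx : ¬ ∀ᶠ n in U, x (blockIndex n - 1) = x (blockIndex n)) :
    ∀ᶠ n in U, (alternating + x) (blockIndex n - 1) = (alternating + x) (blockIndex n) := by
  filter_upwards [Ultrafilter.eventually_not.2 hx, eventually_pos_blockIndex hU] with n hne hpos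
  obtain ⟨m, hm⟩ : ∃ m, blockIndex n = m + 1 := ⟨_, (Nat.succ_pred_eq_of_pos hpos).symm⟩
  have hflip : alternating (m + 1) = !alternating m := by
    simp only [alternating, Nat.odd_add_one, decide_not]
  rw [hm, Nat.add_sub_cancel] at hne ⊢
  rw [Pi.add_apply, Pi.add_apply, hflip]
  revert hne
  cases alternating m <;> cases x m <;> cases x (m + 1) <;> decide

end LastBlocks

theorem not_nullMeasurableSet_setOf_lt_limit_blocks (ν : Measure (ℕ → Bool))
    [ν.IsAddHaarMeasure] {U : Ultrafilter ℕ} (hU : (U : Filter ℕ) ≤ atTop) {μ : Set ℕ → ℝ}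
    (hμ : ∀ A, Tendsto (dens A) U (nhds (μ A))) {t : ℝ} (ht₀ : 0 ≤ t) (ht₁ : t < 1) :
    ¬ NullMeasurableSet {x : ℕ → Bool | t < μ {n | x (blockIndex n) = true}} ν := by
  intro hS
  have htranslate (e : ℕ → Bool) {s : Set (ℕ → Bool)} (hs : ν s = 0) : ν ((e + ·) ⁻¹' s) = 0 :=
    (measurePreserving_add_left ν e).quasiMeasurePreserving.preimage_null hs
  obtain ⟨b₀, hb₀⟩ : ∃ b₀, ν (lastBlocksEq U b₀) = 0 := by
    rcases measure_eq_zero_or_compl_of_flip_invariant ν hS fun e he => by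
      ext x; simp only [mem_preimage, mem_ofPred_eq, limit_blocks_add_of_finite hμ hU he] with h | h
    · exact ⟨true, measure_mono_null (fun x hx => by
        simp [limit_eq_one_of_mem_lastBlocksEq hμ hU hx, ht₁]) h⟩
    · exact ⟨false, measure_mono_null (fun x hx => by
        simp [limit_eq_zero_of_mem_lastBlocksEq hμ hU hx, ht₀]) h⟩
  have hlast (b : Bool) : ν (lastBlocksEq U b) = 0 := by
    obtain rfl | rfl : b = b₀ ∨ b = !b₀ := by cases b <;> cases b₀ <;> simp
    · exact hb₀
    · rw [← preimage_one_add_lastBlocksEq]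
      exact htranslate 1 hb₀
  set agree := {x : ℕ → Bool | ∀ᶠ n in (U : Filter ℕ), x (blockIndex n - 1) = x (blockIndex n)}
  have hagree : ν agree = 0 := measure_mono_null
    (fun x hx => mem_iUnion.2 (mem_lastBlocksEq_of_eventually_eq hx)) (measure_iUnion_null hlast)
  have hcover : univ ⊆ agree ∪ (alternating + ·) ⁻¹' agree :=
    fun x _ => (em _).imp id (eventually_eq_add_alternating hU)
  exact NeZero.ne ν (Measure.measure_univ_eq_zero.1
    (measure_mono_null hcover (measure_union_null hagree (htranslate _ hagree))))

theorem stmt13 (U : Ultrafilter ℕ) (hU : ∀ a : ℕ, U ≠ pure a)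
    (μ : Set ℕ → ℝ)
    (hμ : ∀ A : Set ℕ, Filter.Tendsto (dens A) (U : Filter ℕ) (nhds (μ A))) :
    ∃ ν : Measure (ℕ → Bool), IsFiniteMeasure ν ∧
      ∃ O : Set ℝ, IsOpen O ∧
        ¬ NullMeasurableSet {f : ℕ → Bool | μ {n : ℕ | f n = true} ∈ O} ν := by
  have hUatTop : (U : Filter ℕ) ≤ atTop := by
    rw [← Nat.cofinite_eq_atTop]
    exact U.le_cofinite_or_eq_pure.resolve_right fun ⟨a, ha⟩ => hU a ha
  have hspread : Measurable fun (x : ℕ → Bool) n => x (blockIndex n) :=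
    measurable_pi_lambda _ fun n => measurable_pi_apply _
  refine ⟨Measure.addHaar.map fun (x : ℕ → Bool) n => x (blockIndex n), inferInstance,
    Ioi 0, isOpen_Ioi, fun hS => ?_⟩
  exact not_nullMeasurableSet_setOf_lt_limit_blocks Measure.addHaar hUatTop hμ le_rfl zero_lt_one
    (hS.preimage (MeasurePreserving.mk hspread rfl).quasiMeasurePreserving)
end
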